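/- For finite posets A, B, C and distinct elements a, b ∈ A: (A ▼_a B) ▲_b C = (A ▲_b C) ▼_a B. -/

import Mathlib

/-- The relation of `A ▼_a B` on `(A \ {a}) ⊔ B`; in the last case `x` is
required to be a minimal element of `B`. -/
def vcomp {α β : Type*} (lA : α → α → Prop) (lB : β → β → Prop) (a : α) :
    ({x : α // x ≠ a} ⊕ β) → ({x : α // x ≠ a} ⊕ β) → Prop
  | .inl x, .inl y => lA x.1 y.1
  | .inr x, .inr y => lB x y
  | .inl x, .inr _ => lA x.1 a
  | .inr x, .inl y => (∀ z, lB z x → z = x) ∧ lA a y.1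

/-- The relation of `A ▲_a B` on `(A \ {a}) ⊔ B`; in the third case `y` is
required to be a maximal element of `B`. -/
def acomp {α β : Type*} (lA : α → α → Prop) (lB : β → β → Prop) (a : α) :
    ({x : α // x ≠ a} ⊕ β) → ({x : α // x ≠ a} ⊕ β) → Prop
  | .inl x, .inl y => lA x.1 y.1
  | .inr x, .inr y => lB x y
  | .inl x, .inr y => (∀ z, lB y z → z = y) ∧ lA x.1 a
  | .inr _, .inl y => lA a y.1

/-- The canonical identification of the underlying set of `(A ∘_a B) ∘_b C`
with that of `(A ∘_b C) ∘_a B`, for distinct `a, b ∈ A`. -/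
def parMap {α β γ : Type*} (a b : α) (hne : a ≠ b) :
    ({x : {x : α // x ≠ a} ⊕ β // x ≠ Sum.inl ⟨b, hne.symm⟩} ⊕ γ) →
      ({x : {x : α // x ≠ b} ⊕ γ // x ≠ Sum.inl ⟨a, hne⟩} ⊕ β)
  | .inl ⟨.inl x, h⟩ =>
      .inl ⟨.inl ⟨x.1, fun hx => h (congrArg Sum.inl (Subtype.ext hx))⟩,
        fun hEq => x.2 (congrArg Subtype.val (Sum.inl.inj hEq))⟩
  | .inl ⟨.inr y, _⟩ => .inr y
  | .inr c => .inl ⟨.inr c, fun h => by cases h⟩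

/- Both sides unfold case by case to the same relation; the only case that is not
definitional is `y ∈ B` below `c ∈ C`, where both sides ask for `y` minimal in `B`,
`c` maximal in `C` and `a ≤ b`, in different orders. -/
theorem acomp_vcomp_iff_vcomp_acomp {α β γ : Type*} (lA : α → α → Prop) (lB : β → β → Prop)
    (lC : γ → γ → Prop) (a b : α) (hne : a ≠ b)
    (u v : {x : {x : α // x ≠ a} ⊕ β // x ≠ Sum.inl ⟨b, hne.symm⟩} ⊕ γ) :
    acomp (vcomp lA lB a) lC (Sum.inl ⟨b, hne.symm⟩) u v ↔
      vcomp (acomp lA lC b) lB (Sum.inl ⟨a, hne⟩) (parMap a b hne u) (parMap a b hne v) := by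
  rcases u with ⟨x | y, hu⟩ | c <;> rcases v with ⟨x' | y', hv⟩ | c' <;>
    simp only [acomp, vcomp, parMap, and_left_comm]

theorem stmt10_general {α β γ : Type*}
    [PartialOrder α] [PartialOrder β] [PartialOrder γ] (a b : α) (hne : a ≠ b) :
    ∀ u v : ({x : {x : α // x ≠ a} ⊕ β // x ≠ Sum.inl ⟨b, hne.symm⟩} ⊕ γ),
      acomp (vcomp ((· ≤ ·) : α → α → Prop) ((· ≤ ·) : β → β → Prop) a)
        ((· ≤ ·) : γ → γ → Prop) (Sum.inl ⟨b, hne.symm⟩) u v ↔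
      vcomp (acomp ((· ≤ ·) : α → α → Prop) ((· ≤ ·) : γ → γ → Prop) b)
        ((· ≤ ·) : β → β → Prop) (Sum.inl ⟨a, hne⟩)
        (parMap a b hne u) (parMap a b hne v) :=
  acomp_vcomp_iff_vcomp_acomp _ _ _ a b hne

/-- `(A ▼_a B) ▲_b C = (A ▲_b C) ▼_a B` for distinct `a, b ∈ A`. -/
theorem stmt10 {α β γ : Type*} [Fintype α] [Fintype β] [Fintype γ]
    [PartialOrder α] [PartialOrder β] [PartialOrder γ] (a b : α) (hne : a ≠ b) :
    ∀ u v : ({x : {x : α // x ≠ a} ⊕ β // x ≠ Sum.inl ⟨b, hne.symm⟩} ⊕ γ),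
      acomp (vcomp ((· ≤ ·) : α → α → Prop) ((· ≤ ·) : β → β → Prop) a)
        ((· ≤ ·) : γ → γ → Prop) (Sum.inl ⟨b, hne.symm⟩) u v ↔
      vcomp (acomp ((· ≤ ·) : α → α → Prop) ((· ≤ ·) : γ → γ → Prop) b)
        ((· ≤ ·) : β → β → Prop) (Sum.inl ⟨a, hne⟩)
        (parMap a b hne u) (parMap a b hne v) :=
  stmt10_general a b hne
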